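/- Let l ≥ 1, n ≥ 1, let α₁,...,α_n ≥ 0 with α_n > 0, φ₁,...,φ_n ∈ ℝ, θ₀ < θ₁, C ∈ (0,1) with cos(φ_n - (n/l)θ) ≥ C for all θ ∈ [θ₀, θ₁], and let R > 0. Set f(ρ, θ) = Σ_{k=1}^{n} α_k ρ^{-k/l} cos(φ_k - (k/l)θ). Then for a subset V of {(ρ, θ) : 0 < ρ < R, θ₀ < θ < θ₁}, the following are equivalent: (i) there exists A > 0 with f(ρ, θ) < A for all (ρ, θ) ∈ V; (ii) there exists δ ∈ (0, R) with ρ > δ for all (ρ, θ) ∈ V. -/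

import Mathlib

/-!
Substituting `t = ρ^(-1/l)` turns `f(ρ, θ)` into `∑ bₖ(θ) tᵏ` with `|bₖ(θ)| ≤ |αₖ|` and
leading coefficient `bₙ(θ) ≥ αₙ C > 0`. Bounding `ρ` away from `0` bounds `t`, hence the
polynomial; conversely, for `t ≥ 1` the leading term dominates,
`∑ bₖ tᵏ ≥ tⁿ⁻¹ (αₙ C t - ∑_{k<n} |αₖ|)`, so `f` is large whenever `ρ` is small.
-/

open Real Finset

lemma sum_mul_pow_le_of_abs_le {s : Finset ℕ} {b a : ℕ → ℝ} (hb : ∀ k ∈ s, |b k| ≤ a k)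
    {t T : ℝ} (ht : 0 ≤ t) (htT : t ≤ T) :
    ∑ k ∈ s, b k * t ^ k ≤ ∑ k ∈ s, a k * T ^ k := by
  refine sum_le_sum fun k hk => ?_
  calc b k * t ^ k ≤ |b k| * t ^ k := by gcongr; exact le_abs_self _
    _ ≤ a k * T ^ k :=
      mul_le_mul (hb k hk) (pow_le_pow_left₀ ht htT k) (by positivity)
        ((abs_nonneg _).trans (hb k hk))

lemma pow_pred_mul_sub_le_sum_Icc_mul_pow (b : ℕ → ℝ) {n : ℕ} (hn : 1 ≤ n) {t : ℝ} (ht : 1 ≤ t) :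
    t ^ (n - 1) * (b n * t - ∑ k ∈ Ico 1 n, |b k|) ≤ ∑ k ∈ Icc 1 n, b k * t ^ k := by
  have hlow : ∀ k ∈ Ico 1 n, -(|b k| * t ^ (n - 1)) ≤ b k * t ^ k := fun k hk => by
    have hk : k ≤ n - 1 := Nat.le_sub_one_of_lt (mem_Ico.mp hk).2
    calc -(|b k| * t ^ (n - 1)) ≤ -|b k| * t ^ k := by rw [neg_mul]; gcongr
      _ ≤ b k * t ^ k :=
        mul_le_mul_of_nonneg_right (neg_abs_le _) (pow_nonneg (zero_le_one.trans ht) k)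
  have htop : t ^ (n - 1) * (b n * t) = b n * t ^ n := by
    rw [mul_left_comm, ← pow_succ, Nat.sub_add_cancel hn]
  have hrest := sum_le_sum hlow
  rw [sum_neg_distrib, ← sum_mul] at hrest
  rw [← Icc_erase_right, ← sum_erase_add _ _ (mem_Icc.mpr ⟨hn, le_rfl⟩), Icc_erase_right, ← htop]
  linarith

lemma le_sum_Icc_mul_pow_of_leading (b : ℕ → ℝ) {n : ℕ} (hn : 1 ≤ n) {c S A t : ℝ}
    (hc : c ≤ b n) (hS : ∑ k ∈ Ico 1 n, |b k| ≤ S) (hA : 0 ≤ A) (ht : 1 ≤ t)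
    (hct : A + S ≤ c * t) :
    A ≤ ∑ k ∈ Icc 1 n, b k * t ^ k :=
  calc A ≤ c * t - S := by linarith
    _ ≤ t ^ (n - 1) * (c * t - S) := le_mul_of_one_le_left (by linarith) (one_le_pow₀ ht)
    _ ≤ t ^ (n - 1) * (b n * t - ∑ k ∈ Ico 1 n, |b k|) := by gcongr
    _ ≤ ∑ k ∈ Icc 1 n, b k * t ^ k := pow_pred_mul_sub_le_sum_Icc_mul_pow b hn ht

lemma rpow_neg_natCast_div_eq_pow {ρ : ℝ} (hρ : 0 ≤ ρ) (k l : ℕ) :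
    ρ ^ (-(k : ℝ) / l) = (ρ ^ (-(1 : ℝ) / l)) ^ k := by
  rw [← rpow_natCast, ← rpow_mul hρ]
  ring_nf

lemma rpow_neg_one_div_pow_self {ρ : ℝ} (hρ : 0 ≤ ρ) {l : ℕ} (hl : l ≠ 0) :
    (ρ ^ (-(1 : ℝ) / l)) ^ l = ρ⁻¹ := by
  rw [← rpow_neg_natCast_div_eq_pow hρ, neg_div, div_self (by exact_mod_cast hl), rpow_neg_one]

section PolarSum

variable (α φ : ℕ → ℝ) (l n : ℕ)

noncomputable def polarSum (ρ θ : ℝ) : ℝ :=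
  ∑ k ∈ Icc 1 n, α k * ρ ^ (-(k : ℝ) / l) * cos (φ k - ((k : ℝ) / l) * θ)

variable {α φ l n}

lemma polarSum_eq_sum_mul_pow {ρ : ℝ} (hρ : 0 ≤ ρ) (θ : ℝ) :
    polarSum α φ l n ρ θ =
      ∑ k ∈ Icc 1 n, (α k * cos (φ k - ((k : ℝ) / l) * θ)) * (ρ ^ (-(1 : ℝ) / l)) ^ k := by
  refine sum_congr rfl fun k _ => ?_
  rw [rpow_neg_natCast_div_eq_pow hρ]
  ring

lemma abs_mul_cos_le_abs (a x : ℝ) : |a * cos x| ≤ |a| := by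
  simpa only [abs_mul] using mul_le_of_le_one_right (abs_nonneg a) (abs_cos_le_one x)

lemma polarSum_le {δ ρ : ℝ} (hδ : 0 < δ) (hδρ : δ ≤ ρ) (θ : ℝ) :
    polarSum α φ l n ρ θ ≤ ∑ k ∈ Icc 1 n, |α k| * (δ ^ (-(1 : ℝ) / l)) ^ k := by
  rw [polarSum_eq_sum_mul_pow (hδ.trans_le hδρ).le]
  refine sum_mul_pow_le_of_abs_le (fun k _ => abs_mul_cos_le_abs _ _)
    (rpow_nonneg (hδ.trans_le hδρ).le _) ?_
  exact rpow_le_rpow_of_nonpos hδ hδρ (div_nonpos_of_nonpos_of_nonneg (by norm_num) l.cast_nonneg)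

lemma le_polarSum (hl : l ≠ 0) (hn : 1 ≤ n) {A c ρ θ : ℝ} (hA : 0 ≤ A) (hc : 0 < c)
    (hcθ : c ≤ α n * cos (φ n - ((n : ℝ) / l) * θ)) (hρ : 0 < ρ)
    (hρA : ρ ≤ (max 1 ((A + ∑ k ∈ Ico 1 n, |α k|) / c) ^ l)⁻¹) :
    A ≤ polarSum α φ l n ρ θ := by
  set T := max 1 ((A + ∑ k ∈ Ico 1 n, |α k|) / c)
  have hTt : T ≤ ρ ^ (-(1 : ℝ) / l) := by
    refine (pow_le_pow_iff_left₀ (by positivity) (by positivity) hl).mp ?_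
    rw [rpow_neg_one_div_pow_self hρ.le hl]
    exact (le_inv_comm₀ hρ (by positivity)).mp hρA
  rw [polarSum_eq_sum_mul_pow hρ.le]
  refine le_sum_Icc_mul_pow_of_leading _ hn hcθ
    (sum_le_sum fun k _ => abs_mul_cos_le_abs _ _) hA ((le_max_left _ _).trans hTt) ?_
  rw [← div_le_iff₀' hc]
  exact (le_max_right _ _).trans hTt

end PolarSum

theorem stmt4_general (l n : ℕ) (hl : 1 ≤ l) (hn : 1 ≤ n)
    (α φ : ℕ → ℝ) (hαn : 0 < α n)
    (θ₀ θ₁ C : ℝ) (hC0 : 0 < C)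
    (hcos : ∀ θ ∈ Set.Icc θ₀ θ₁, C ≤ Real.cos (φ n - ((n : ℝ) / l) * θ))
    (R : ℝ) (hR : 0 < R)
    (V : Set (ℝ × ℝ))
    (hV : V ⊆ {p : ℝ × ℝ | 0 < p.1 ∧ p.1 < R ∧ θ₀ < p.2 ∧ p.2 < θ₁}) :
    (∃ A > 0, ∀ p ∈ V,
        (∑ k ∈ Finset.Icc 1 n, α k * p.1 ^ (-(k : ℝ) / l) * Real.cos (φ k - ((k : ℝ) / l) * p.2)) < A)
      ↔ (∃ δ : ℝ, 0 < δ ∧ δ < R ∧ ∀ p ∈ V, δ < p.1) := by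
  constructor
  · rintro ⟨A, hA, hAV⟩
    set δ₀ := (max 1 ((A + ∑ k ∈ Ico 1 n, |α k|) / (α n * C)) ^ l)⁻¹
    refine ⟨min δ₀ (R / 2), by positivity, (min_le_right _ _).trans_lt (by linarith),
      fun p hp => (min_le_left _ _).trans_lt (lt_of_not_ge fun hρδ => ?_)⟩
    obtain ⟨hρ, -, hθ₀, hθ₁⟩ := hV hp
    have hcθ := mul_le_mul_of_nonneg_left (hcos p.2 ⟨hθ₀.le, hθ₁.le⟩) hαn.le
    exact (hAV p hp).not_ge (le_polarSum (by omega) hn hA.le (by positivity) hcθ hρ hρδ)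
  · rintro ⟨δ, hδ, -, hδV⟩
    refine ⟨1 + ∑ k ∈ Icc 1 n, |α k| * (δ ^ (-(1 : ℝ) / l)) ^ k, by positivity, fun p hp => ?_⟩
    exact (polarSum_le hδ (hδV p hp).le p.2).trans_lt (lt_one_add _)

theorem stmt4 (l n : ℕ) (hl : 1 ≤ l) (hn : 1 ≤ n)
    (α φ : ℕ → ℝ) (hα : ∀ k ∈ Finset.Icc 1 n, 0 ≤ α k) (hαn : 0 < α n)
    (θ₀ θ₁ C : ℝ) (hθ : θ₀ < θ₁) (hC0 : 0 < C) (hC1 : C < 1)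
    (hcos : ∀ θ ∈ Set.Icc θ₀ θ₁, C ≤ Real.cos (φ n - ((n : ℝ) / l) * θ))
    (R : ℝ) (hR : 0 < R)
    (V : Set (ℝ × ℝ))
    (hV : V ⊆ {p : ℝ × ℝ | 0 < p.1 ∧ p.1 < R ∧ θ₀ < p.2 ∧ p.2 < θ₁}) :
    (∃ A > 0, ∀ p ∈ V,
        (∑ k ∈ Finset.Icc 1 n, α k * p.1 ^ (-(k : ℝ) / l) * Real.cos (φ k - ((k : ℝ) / l) * p.2)) < A)
      ↔ (∃ δ : ℝ, 0 < δ ∧ δ < R ∧ ∀ p ∈ V, δ < p.1) :=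
  stmt4_general l n hl hn α φ hαn θ₀ θ₁ C hC0 hcos R hR V hV
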